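/- Let (ρ₋, E₋) be an incoming supersonic solution on [0, T] whose Mach number satisfies (M₋²)'(t) > 0 for 0 < t < T. For t_s ∈ (0, T), let κ_s(t_s) := p_s(t_s)/ρ_s(t_s)^γ be the entropy constant of the Rankine–Hugoniot downstream state of (ρ₋, u₋, p₋, E₋)(t_s). Then κ_s(t_s) > κ0 and dκ_s(t_s)/dt_s > 0 for all t_s ∈ (0, T). -/

import Mathlib

open Real Set

/-- The right-hand side `g1(t, ρ, E, κ)` of the density equation of the reduced
radial Euler–Poisson system (with `t̂ = r0 − t` and mass flux `m0`). -/
noncomputable def g1 (γ r0 m0 κ t ρv Ev : ℝ) : ℝ :=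
  ρv * ((r0 - t) * Ev - m0 ^ 2 / ((r0 - t) ^ 2 * ρv ^ 2)) /
    ((r0 - t) * (γ * κ * ρv ^ (γ - 1) - m0 ^ 2 / ((r0 - t) ^ 2 * ρv ^ 2)))

/-- The right-hand side `g2(t, ρ, E) = t̂·(ρ − b(t))` of the electric-field equation. -/
noncomputable def g2 (r0 t ρv bv : ℝ) : ℝ := (r0 - t) * (ρv - bv)

/-- `(ρ, E)` is a (C¹) solution of the reduced radial Euler–Poisson system with
entropy constant `κ` on the set `I`: `ρ > 0`, `ρ' = g1(t, ρ, E, κ)` and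
`(t̂·E)' = g2(t, ρ, E)` on `I`. -/
def EPsol (γ r0 m0 κ : ℝ) (b ρ E : ℝ → ℝ) (I : Set ℝ) : Prop :=
  (∀ t ∈ I, 0 < ρ t) ∧
  (∀ t ∈ I, HasDerivAt ρ (g1 γ r0 m0 κ t (ρ t) (E t)) t) ∧
  (∀ t ∈ I, HasDerivAt (fun s => (r0 - s) * E s) (g2 r0 t (ρ t) (b t)) t)

/-- The associated velocity `u = m0/(t̂·ρ)`. -/
noncomputable def uA (r0 m0 : ℝ) (ρ : ℝ → ℝ) (t : ℝ) : ℝ := m0 / ((r0 - t) * ρ t)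

/-- The associated pressure `p = κ·ρ^γ`. -/
noncomputable def pA (γ κ : ℝ) (ρ : ℝ → ℝ) (t : ℝ) : ℝ := κ * ρ t ^ γ

/-- The associated squared Mach number `M² = ρ·u²/(γ·p)`. -/
noncomputable def MsqA (γ r0 m0 κ : ℝ) (ρ : ℝ → ℝ) (t : ℝ) : ℝ :=
  ρ t * uA r0 m0 ρ t ^ 2 / (γ * pA γ κ ρ t)

/-- The associated Bernoulli function `B = u²/2 + γ·p/((γ−1)·ρ)`. -/
noncomputable def BA (γ r0 m0 κ : ℝ) (ρ : ℝ → ℝ) (t : ℝ) : ℝ :=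
  uA r0 m0 ρ t ^ 2 / 2 + γ * pA γ κ ρ t / ((γ - 1) * ρ t)

/-- `K₋ = (2(γ−1)/(γ+1))·B₋` of the Rankine–Hugoniot jump at time `t` along the
incoming solution `ρm` (with entropy constant `κ0`). -/
noncomputable def KsA (γ r0 m0 κ0 : ℝ) (ρm : ℝ → ℝ) (t : ℝ) : ℝ :=
  2 * (γ - 1) / (γ + 1) * BA γ r0 m0 κ0 ρm t

/-- Downstream density `ρ_s = ρ₋u₋²/K₋` of the Rankine–Hugoniot jump at `t`. -/
noncomputable def ρsA (γ r0 m0 κ0 : ℝ) (ρm : ℝ → ℝ) (t : ℝ) : ℝ :=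
  ρm t * uA r0 m0 ρm t ^ 2 / KsA γ r0 m0 κ0 ρm t

/-- Downstream velocity `u_s = K₋/u₋` of the Rankine–Hugoniot jump at `t`. -/
noncomputable def usA (γ r0 m0 κ0 : ℝ) (ρm : ℝ → ℝ) (t : ℝ) : ℝ :=
  KsA γ r0 m0 κ0 ρm t / uA r0 m0 ρm t

/-- Downstream pressure `p_s = ρ₋u₋² + p₋ − ρ₋K₋` of the Rankine–Hugoniot jump at `t`. -/
noncomputable def psA (γ r0 m0 κ0 : ℝ) (ρm : ℝ → ℝ) (t : ℝ) : ℝ :=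
  ρm t * uA r0 m0 ρm t ^ 2 + pA γ κ0 ρm t - ρm t * KsA γ r0 m0 κ0 ρm t

/-- Downstream entropy constant `κ_s = p_s/ρ_s^γ` of the Rankine–Hugoniot jump at `t`. -/
noncomputable def κsA (γ r0 m0 κ0 : ℝ) (ρm : ℝ → ℝ) (t : ℝ) : ℝ :=
  psA γ r0 m0 κ0 ρm t / ρsA γ r0 m0 κ0 ρm t ^ γ

/-- `(ρm, Em)` is an incoming supersonic solution on `[0, T]`:
it solves the reduced Euler–Poisson system with entropy constant `κ0`,
starts from `(ρ0, E0)` and is supersonic throughout. -/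
def IncSol (γ r0 m0 κ0 ρ0 E0 T : ℝ) (b ρm Em : ℝ → ℝ) : Prop :=
  EPsol γ r0 m0 κ0 b ρm Em (Icc 0 T) ∧ ρm 0 = ρ0 ∧ Em 0 = E0 ∧
  ∀ t ∈ Icc 0 T, 1 < MsqA γ r0 m0 κ0 ρm t

/-- `(ρp, Ep)` is a downstream subsonic solution on `[ts, T]` behind a shock at `ts`:
it solves the reduced Euler–Poisson system with entropy constant `κ_s(ts)`, starts from
the Rankine–Hugoniot downstream state of the incoming solution `(ρm, Em)` at `ts`,
and satisfies `0 < M₊ < 1` on `[ts, T]`. -/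
def DownSol (γ r0 m0 κ0 T : ℝ) (b ρm Em : ℝ → ℝ) (ts : ℝ) (ρp Ep : ℝ → ℝ) : Prop :=
  EPsol γ r0 m0 (κsA γ r0 m0 κ0 ρm ts) b ρp Ep (Icc ts T) ∧
  ρp ts = ρsA γ r0 m0 κ0 ρm ts ∧ Ep ts = Em ts ∧
  ∀ t ∈ Icc ts T, 0 < MsqA γ r0 m0 (κsA γ r0 m0 κ0 ρm ts) ρp t ∧
    MsqA γ r0 m0 (κsA γ r0 m0 κ0 ρm ts) ρp t < 1

/-!
The Rankine–Hugoniot downstream entropy constant depends on the upstream state only through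
its entropy constant and its squared Mach number `m`: `κ_s = κ₋ · f(m)` with
`f(m) = (2γm − (γ − 1))/(γ + 1) · (((γ − 1)m + 2)/((γ + 1)m))^γ`. Now `f(1) = 1` and
`f'(m) = c(m)·(m − 1)²` with `c > 0`, so `f` is strictly increasing; a supersonic upstream
state (`m > 1`) therefore gives `κ_s > κ0`, and the chain rule with `(M₋²)' > 0` gives
`κ_s' > 0`.
-/

noncomputable def entropyJumpFactor (γ m : ℝ) : ℝ :=
  (2 * γ * m - (γ - 1)) / (γ + 1) * (((γ - 1) * m + 2) / ((γ + 1) * m)) ^ γ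

lemma entropyJumpFactor_one {γ : ℝ} (hγ : γ + 1 ≠ 0) : entropyJumpFactor γ 1 = 1 := by
  simp only [entropyJumpFactor]
  rw [show 2 * γ * 1 - (γ - 1) = γ + 1 by ring, show (γ - 1) * 1 + 2 = γ + 1 by ring,
    mul_one, div_self hγ, one_rpow, one_mul]

lemma hasDerivAt_entropyJumpFactor {γ m : ℝ} (hγ : 1 < γ) (hm : 0 < m) :
    HasDerivAt (entropyJumpFactor γ)
      ((((γ - 1) * m + 2) / ((γ + 1) * m)) ^ (γ - 1) * (2 * γ * (γ - 1) * (m - 1) ^ 2) /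
        ((γ + 1) * m) ^ 2) m := by
  have hnum : 0 < (γ - 1) * m + 2 := by nlinarith
  have hden : 0 < (γ + 1) * m := by nlinarith
  have hq : 0 < ((γ - 1) * m + 2) / ((γ + 1) * m) := div_pos hnum hden
  have hlin : HasDerivAt (fun x => (2 * γ * x - (γ - 1)) / (γ + 1)) (2 * γ / (γ + 1)) m := by
    simpa using (((hasDerivAt_id m).const_mul (2 * γ)).sub_const (γ - 1)).div_const (γ + 1)
  have hratio : HasDerivAt (fun x => ((γ - 1) * x + 2) / ((γ + 1) * x))
      (-(2 * (γ + 1)) / ((γ + 1) * m) ^ 2) m := by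
    have h := (((hasDerivAt_id m).const_mul (γ - 1)).add_const 2).div
      ((hasDerivAt_id m).const_mul (γ + 1)) hden.ne'
    refine h.congr_deriv ?_
    simp only [id, mul_one]
    ring
  refine (hlin.mul (hratio.rpow_const (Or.inl hq.ne'))).congr_deriv ?_
  rw [show (((γ - 1) * m + 2) / ((γ + 1) * m)) ^ γ =
      (((γ - 1) * m + 2) / ((γ + 1) * m)) ^ (γ - 1) * (((γ - 1) * m + 2) / ((γ + 1) * m)) by
    rw [← rpow_add_one hq.ne']; ring_nf]
  generalize (((γ - 1) * m + 2) / ((γ + 1) * m)) ^ (γ - 1) = X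
  have : γ + 1 ≠ 0 := by linarith
  field_simp
  ring

lemma differentiableAt_entropyJumpFactor {γ m : ℝ} (hγ : 1 < γ) (hm : 0 < m) :
    DifferentiableAt ℝ (entropyJumpFactor γ) m :=
  (hasDerivAt_entropyJumpFactor hγ hm).differentiableAt

lemma deriv_entropyJumpFactor_pos {γ m : ℝ} (hγ : 1 < γ) (hm : 0 < m) (hm1 : m ≠ 1) :
    0 < deriv (entropyJumpFactor γ) m := by
  rw [(hasDerivAt_entropyJumpFactor hγ hm).deriv]
  have hnum : 0 < (γ - 1) * m + 2 := by nlinarith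
  have hden : 0 < (γ + 1) * m := by nlinarith
  have hsq : 0 < (m - 1) ^ 2 := sq_pos_of_ne_zero (sub_ne_zero.mpr hm1)
  have hγ1 : 0 < γ - 1 := by linarith
  have : 0 < (((γ - 1) * m + 2) / ((γ + 1) * m)) ^ (γ - 1) :=
    rpow_pos_of_pos (div_pos hnum hden) _
  positivity

lemma strictMonoOn_entropyJumpFactor {γ : ℝ} (hγ : 1 < γ) :
    StrictMonoOn (entropyJumpFactor γ) (Ici 1) := by
  refine strictMonoOn_of_deriv_pos (convex_Ici 1) (fun m hm => ?_) (fun m hm => ?_)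
  · exact (differentiableAt_entropyJumpFactor hγ
      (zero_lt_one.trans_le hm)).continuousAt.continuousWithinAt
  · rw [interior_Ici, mem_Ioi] at hm
    exact deriv_entropyJumpFactor_pos hγ (zero_lt_one.trans hm) hm.ne'

lemma one_lt_entropyJumpFactor {γ m : ℝ} (hγ : 1 < γ) (hm : 1 < m) :
    1 < entropyJumpFactor γ m := by
  simpa [entropyJumpFactor_one (by linarith : γ + 1 ≠ 0)] using
    strictMonoOn_entropyJumpFactor hγ self_mem_Ici (mem_Ici.mpr hm.le) hm

lemma rankineHugoniot_entropy_eq {γ ρ u p K : ℝ} (hγ : 1 < γ) (hρ : 0 < ρ) (hp : 0 < p)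
    (hu : u ≠ 0) (hK : K = 2 * (γ - 1) / (γ + 1) * (u ^ 2 / 2 + γ * p / ((γ - 1) * ρ))) :
    (ρ * u ^ 2 + p - ρ * K) / (ρ * u ^ 2 / K) ^ γ =
      p / ρ ^ γ * entropyJumpFactor γ (ρ * u ^ 2 / (γ * p)) := by
  set m := ρ * u ^ 2 / (γ * p) with hm_def
  have hγ1 : 0 < γ - 1 := by linarith
  have hm : 0 < m := by positivity
  have hnum : 0 < (γ - 1) * m + 2 := by nlinarith
  have hden : 0 < (γ + 1) * m := by nlinarith
  have hp_eq : p = ρ * u ^ 2 / (γ * m) := by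
    rw [hm_def]; field_simp
  have hK_eq : K = u ^ 2 * ((γ - 1) * m + 2) / ((γ + 1) * m) := by
    rw [hK, hp_eq]; field_simp
  have hρs : ρ * u ^ 2 / K = ρ * (((γ - 1) * m + 2) / ((γ + 1) * m))⁻¹ := by
    rw [hK_eq]; field_simp
  have hps : ρ * u ^ 2 + p - ρ * K = p * ((2 * γ * m - (γ - 1)) / (γ + 1)) := by
    rw [hK_eq, hp_eq]; field_simp; ring
  have hq : 0 < ((γ - 1) * m + 2) / ((γ + 1) * m) := div_pos hnum hden
  rw [hps, hρs, mul_rpow hρ.le (inv_nonneg.mpr hq.le), inv_rpow hq.le, entropyJumpFactor]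
  have : 0 < (((γ - 1) * m + 2) / ((γ + 1) * m)) ^ γ := rpow_pos_of_pos hq γ
  have : 0 < ρ ^ γ := rpow_pos_of_pos hρ γ
  field_simp

lemma pos_and_uA_ne_zero_of_MsqA_pos {γ r0 m0 κ t : ℝ} {ρ : ℝ → ℝ} (hγ : 0 < γ)
    (hρ : 0 < ρ t) (hM : 0 < MsqA γ r0 m0 κ ρ t) : 0 < κ ∧ uA r0 m0 ρ t ≠ 0 := by
  rcases div_pos_iff.mp hM with ⟨hρu, hγp⟩ | ⟨hρu, -⟩
  · refine ⟨pos_of_mul_pos_left (pos_of_mul_pos_right hγp hγ.le) (rpow_pos_of_pos hρ γ).le,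
      fun hu => ?_⟩
    simp [hu] at hρu
  · exact absurd hρu (not_lt.mpr (by positivity))

lemma κsA_eq_mul_entropyJumpFactor {γ r0 m0 κ0 t : ℝ} {ρm : ℝ → ℝ} (hγ : 1 < γ)
    (hρ : 0 < ρm t) (hM : 0 < MsqA γ r0 m0 κ0 ρm t) :
    κsA γ r0 m0 κ0 ρm t = κ0 * entropyJumpFactor γ (MsqA γ r0 m0 κ0 ρm t) := by
  obtain ⟨hκ, hu⟩ := pos_and_uA_ne_zero_of_MsqA_pos (by linarith) hρ hM
  have hργ : 0 < ρm t ^ γ := rpow_pos_of_pos hρ γ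
  rw [κsA, psA, ρsA, rankineHugoniot_entropy_eq (p := pA γ κ0 ρm t) (K := KsA γ r0 m0 κ0 ρm t)
    hγ hρ (mul_pos hκ hργ) hu rfl, MsqA, pA, mul_div_cancel_right₀ _ hργ.ne']

theorem stmt8_general (γ r0 ρ0 E0 T : ℝ) (b : ℝ → ℝ)
    (hγ : 1 < γ)
    (m0 κ0 : ℝ)
    (ρm Em : ℝ → ℝ) (hinc : IncSol γ r0 m0 κ0 ρ0 E0 T b ρm Em)
    (hMmono : ∀ t ∈ Ioo 0 T, 0 < deriv (MsqA γ r0 m0 κ0 ρm) t) :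
    ∀ ts ∈ Ioo 0 T,
      κ0 < κsA γ r0 m0 κ0 ρm ts ∧ 0 < deriv (κsA γ r0 m0 κ0 ρm) ts := by
  obtain ⟨⟨hρ, -, -⟩, -, -, hsuper⟩ := hinc
  set M := MsqA γ r0 m0 κ0 ρm
  have hκsA : ∀ t ∈ Ioo 0 T, κsA γ r0 m0 κ0 ρm t = κ0 * entropyJumpFactor γ (M t) :=
    fun t ht => κsA_eq_mul_entropyJumpFactor hγ (hρ t (Ioo_subset_Icc_self ht))
      (zero_lt_one.trans (hsuper t (Ioo_subset_Icc_self ht)))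
  intro ts hts
  have hM1 : 1 < M ts := hsuper ts (Ioo_subset_Icc_self hts)
  have hM0 : 0 < M ts := zero_lt_one.trans hM1
  have hκ0 : 0 < κ0 := (pos_and_uA_ne_zero_of_MsqA_pos (by linarith)
    (hρ ts (Ioo_subset_Icc_self hts)) hM0).1
  refine ⟨?_, ?_⟩
  · rw [hκsA ts hts]
    exact lt_mul_right hκ0 (one_lt_entropyJumpFactor hγ hM1)
  · -- `M` is differentiable at `ts` because its derivative there is nonzero.
    have hMd : HasDerivAt M (deriv M ts) ts :=
      (differentiableAt_of_deriv_ne_zero (hMmono ts hts).ne').hasDerivAt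
    have hf := (differentiableAt_entropyJumpFactor hγ hM0).hasDerivAt
    have hcomp : HasDerivAt (fun t => κ0 * entropyJumpFactor γ (M t))
        (κ0 * (deriv (entropyJumpFactor γ) (M ts) * deriv M ts)) ts :=
      (hf.comp ts hMd).const_mul κ0
    rw [Filter.EventuallyEq.deriv_eq (Filter.eventually_of_mem (Ioo_mem_nhds hts.1 hts.2) hκsA),
      hcomp.deriv]
    exact mul_pos hκ0 (mul_pos (deriv_entropyJumpFactor_pos hγ hM0 hM1.ne') (hMmono ts hts))

/-- Along an incoming supersonic solution on `[0, T]` whose squared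
Mach number is strictly increasing, the downstream entropy constant
`κ_s(t_s) = p_s(t_s)/ρ_s(t_s)^γ` of the Rankine–Hugoniot jump satisfies
`κ_s(t_s) > κ0` and `dκ_s/dt_s > 0` for all `t_s ∈ (0, T)`. -/
theorem stmt8 (γ r0 b0 ρ0 u0 p0 E0 T : ℝ) (b : ℝ → ℝ)
    (hγ : 1 < γ) (hr0 : 0 < r0) (hb0 : 0 < b0)
    (hbC1 : ContDiffOn ℝ 1 b (Icc 0 r0))
    (hbpos : ∀ t ∈ Icc 0 r0, 0 < b t)
    (hbbd : ∀ t ∈ Icc 0 r0, |b t| ≤ b0 ∧ |derivWithin b (Icc 0 r0) t| ≤ b0)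
    (hρ0 : 0 < ρ0) (hu0 : 0 < u0) (hp0 : 0 < p0) (hE0 : 0 < E0)
    (m0 κ0 : ℝ) (hm0 : m0 = r0 * ρ0 * u0) (hκ0 : κ0 = p0 / ρ0 ^ γ)
    (hT : 0 < T) (hTr : T < r0)
    (ρm Em : ℝ → ℝ) (hinc : IncSol γ r0 m0 κ0 ρ0 E0 T b ρm Em)
    (hMmono : ∀ t ∈ Ioo 0 T, 0 < deriv (MsqA γ r0 m0 κ0 ρm) t) :
    ∀ ts ∈ Ioo 0 T,
      κ0 < κsA γ r0 m0 κ0 ρm ts ∧ 0 < deriv (κsA γ r0 m0 κ0 ρm) ts :=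
  stmt8_general γ r0 ρ0 E0 T b hγ m0 κ0 ρm Em hinc hMmono
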